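/- Let $n, d, p$ be non-negative integers with $0 \le d < n$ and $p \le n-d$. Then for every co-signotope $\tau \in \bar{\mathcal{S}}_p(n,d)$, its p-sequence $(|\mathcal{C}^{\tau}_0|, \dots, |\mathcal{C}^{\tau}_d|)$ is a sparse composition of $p$ of length $d+1$. -/

import Mathlib

/-! Common definitions: signotopes and co-signotopes on `[n] = {1, …, n}` (encoded as
`Finset.Icc 1 n` in `ℕ`), sign functions are `Finset ℕ → Bool` (`true` = `+`, `false` = `-`)
that vanish (are `-`) away from the relevant subsets. -/

open Classical in
/-- The sign function with `+`-set `S` (and `-` elsewhere). -/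
noncomputable def ofPlusSet (S : Set (Finset ℕ)) : Finset ℕ → Bool :=
  fun A => if A ∈ S then true else false

/-- Number of sign changes in a list of signs. -/
def signChanges (l : List Bool) : ℕ :=
  ((l.zip l.tail).filter fun p => p.1 ≠ p.2).length

/-- Number of `+`-subsets of a sign function. -/
noncomputable def plusCount (τ : Finset ℕ → Bool) : ℕ :=
  {A : Finset ℕ | τ A = true}.ncard

/-- The series of signs `τ (C ∪ {x})` for `x ∈ [n] \ C` in increasing order.
For a `d`-subset `B` with `i`-th smallest element `b`, `series n τ (B.erase b)` is
the `(τ,B,i)`-series. -/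
def series (n : ℕ) (τ : Finset ℕ → Bool) (C : Finset ℕ) : List Bool :=
  ((Finset.Icc 1 n \ C).sort (· ≤ ·)).map fun x => τ (insert x C)

/-- An `r`-signotope on `[n]`, encoded as a sign function on all of `Finset ℕ`
which is `-` away from the `r`-subsets of `[n]`. -/
def IsSignotope (n r : ℕ) (σ : Finset ℕ → Bool) : Prop :=
  (∀ A, σ A = true → A ⊆ Finset.Icc 1 n ∧ A.card = r) ∧
  ∀ X : Finset ℕ, X ⊆ Finset.Icc 1 n → X.card = r + 1 →
    signChanges ((X.sort (· ≤ ·)).map fun x => σ (X.erase x)) ≤ 1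

/-- A `d`-co-signotope on `[n]`: every `(τ,B,i)`-series has at most one sign change. -/
def IsCoSignotope (n d : ℕ) (τ : Finset ℕ → Bool) : Prop :=
  (∀ A, τ A = true → A ⊆ Finset.Icc 1 n ∧ A.card = d) ∧
  ∀ B : Finset ℕ, B ⊆ Finset.Icc 1 n → B.card = d → ∀ b ∈ B,
    signChanges (series n τ (B.erase b)) ≤ 1

/-- `𝒮_p(n,r)`: `r`-signotopes on `[n]` with exactly `p` `+`-signs. -/
noncomputable def sigSet (n r p : ℕ) : Set (Finset ℕ → Bool) :=
  {σ | IsSignotope n r σ ∧ plusCount σ = p}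

/-- `𝒮_{≤p}(n,r)`. -/
noncomputable def sigSetLe (n r p : ℕ) : Set (Finset ℕ → Bool) :=
  {σ | IsSignotope n r σ ∧ plusCount σ ≤ p}

/-- `𝒮̄_p(n,d)`: `d`-co-signotopes on `[n]` with exactly `p` `+`-subsets. -/
noncomputable def coSigSet (n d p : ℕ) : Set (Finset ℕ → Bool) :=
  {τ | IsCoSignotope n d τ ∧ plusCount τ = p}

/-- `𝒮̄_{≤p}(n,d)`. -/
noncomputable def coSigSetLe (n d p : ℕ) : Set (Finset ℕ → Bool) :=
  {τ | IsCoSignotope n d τ ∧ plusCount τ ≤ p}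

/-- `σ` and `τ` differ by a single step: `σ⁻¹(+) ⊊ τ⁻¹(+)` and `|τ⁻¹(+)| = |σ⁻¹(+)| + 1`. -/
noncomputable def SingleStep (σ τ : Finset ℕ → Bool) : Prop :=
  {A | σ A = true} ⊂ {A | τ A = true} ∧ plusCount τ = plusCount σ + 1

/-- The higher Bruhat order on `r`-signotopes on `[n]`: reflexive-transitive closure of
the single step relation. -/
noncomputable def BruhatLe (n r : ℕ) (σ τ : Finset ℕ → Bool) : Prop :=
  Relation.ReflTransGen (fun a b => IsSignotope n r a ∧ IsSignotope n r b ∧ SingleStep a b) σ τ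

/-- The complementary higher Bruhat order on `d`-co-signotopes on `[n]`. -/
noncomputable def CoBruhatLe (n d : ℕ) (σ τ : Finset ℕ → Bool) : Prop :=
  Relation.ReflTransGen (fun a b => IsCoSignotope n d a ∧ IsCoSignotope n d b ∧ SingleStep a b) σ τ

/-- Adjacency in the graph `G_{n,d}`: `B' = (B \ {x}) ∪ {y}` with no element of `B \ {x}`
strictly between `x` and `y`. -/
def GAdj (n d : ℕ) (B B' : Finset ℕ) : Prop :=
  B ⊆ Finset.Icc 1 n ∧ B.card = d ∧ B' ⊆ Finset.Icc 1 n ∧ B'.card = d ∧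
  ∃ x ∈ B, ∃ y ∈ Finset.Icc 1 n, y ∉ B ∧ B' = insert y (B.erase x) ∧
    ∀ z ∈ B.erase x, ¬(min x y < z ∧ z < max x y)

/-- The source subset `S_{n,d,i} = {1,…,i} ∪ {n-d+i+1,…,n}`. -/
def sourceSubset (n d i : ℕ) : Finset ℕ :=
  Finset.Icc 1 i ∪ Finset.Icc (n - d + i + 1) n

/-- Connectivity inside the `+`-subsets of `τ` (the induced subgraph `G_{n,d}[τ]`). -/
def plusConn (n d : ℕ) (τ : Finset ℕ → Bool) : Finset ℕ → Finset ℕ → Prop :=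
  Relation.ReflTransGen fun A A' => τ A = true ∧ τ A' = true ∧ GAdj n d A A'

/-- The vertex set `𝒞^τ_i` of the `+`-component of `τ` containing `S_{n,d,i}`
(empty if `S_{n,d,i}` is not a `+`-subset). -/
def comp (n d : ℕ) (τ : Finset ℕ → Bool) (i : ℕ) : Set (Finset ℕ) :=
  {B | τ (sourceSubset n d i) = true ∧ τ B = true ∧ plusConn n d τ (sourceSubset n d i) B}

/-- The `j`-th smallest element (1-based) of a finite set of naturals. -/
def nthElt (B : Finset ℕ) (j : ℕ) : ℕ := (B.sort (· ≤ ·)).getD (j - 1) 0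

/-- `b_j` with the conventions `b_0 = 0` and `b_{d+1} = n+1` (as an integer). -/
def extNth (n d : ℕ) (B : Finset ℕ) (j : ℕ) : ℤ :=
  if j = 0 then 0 else if j ≤ d then (nthElt B j : ℤ) else (n : ℤ) + 1

/-- A series is left-aligned if it starts with `+` and ends with `-`. -/
def LeftAligned (l : List Bool) : Prop :=
  l.head? = some true ∧ l.getLast? = some false

/-- A series is right-aligned if it starts with `-` and ends with `+`. -/
def RightAligned (l : List Bool) : Prop :=
  l.head? = some false ∧ l.getLast? = some true

/-- `𝒮̄_{p,i}(n,d)`: co-signotopes in `𝒮̄_p(n,d)` whose only nonempty `+`-component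
is `𝒞^τ_i` (i.e. every `+`-subset lies in `𝒞^τ_i`). -/
noncomputable def coSigOnly (n d p i : ℕ) : Set (Finset ℕ → Bool) :=
  {τ | IsCoSignotope n d τ ∧ plusCount τ = p ∧ ∀ B, τ B = true → B ∈ comp n d τ i}

/-- `Z(d,i)`: points `(a_1,…,a_d) ∈ ℤ_{>0}^d` (0-indexed in Lean) with `a_j ≥ a_{j-1}`
for `j ∈ [2,i]` and `a_j ≥ a_{j+1}` for `j ∈ [i+1,d-1]` (1-based indices). -/
def ZSet (d i : ℕ) : Set (Fin d → ℤ) :=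
  {a | (∀ j, 0 < a j) ∧
    (∀ j k : Fin d, (j : ℕ) + 1 = (k : ℕ) → (k : ℕ) + 1 ≤ i → a j ≤ a k) ∧
    (∀ j k : Fin d, (j : ℕ) + 1 = (k : ℕ) → i ≤ (j : ℕ) → a k ≤ a j)}

/-- A `(d,i)`-Ferrers diagram with respect to `p`. -/
def IsFerrers (d i p : ℕ) (F : Set (Fin d → ℤ)) : Prop :=
  F ⊆ ZSet d i ∧ F.ncard = p ∧
  ∀ a ∈ F, ∀ a' ∈ ZSet d i, (∀ j, a' j ≤ a j) → a' ∈ F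

/-- The number of `(d,i)`-Ferrers diagrams with respect to `p`. -/
noncomputable def ferrersCount (d i p : ℕ) : ℕ :=
  {F : Set (Fin d → ℤ) | IsFerrers d i p F}.ncard

/-- `f_{n,d,i,j}` (here `j` is the 1-based coordinate index). -/
def fFun (n d i j : ℕ) (x : ℕ) : ℤ :=
  if j ≤ i then (x : ℤ) - j + 1 else ((n : ℤ) - x) - ((d : ℤ) - j) + 1

/-- `g_{n,d,i}` maps a `d`-subset `B = (b_1 < … < b_d)` to
`(f_{n,d,i,1}(b_1), …, f_{n,d,i,d}(b_d))`. -/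
def gMap (n d i : ℕ) (B : Finset ℕ) : Fin d → ℤ :=
  fun k => fFun n d i ((k : ℕ) + 1) (nthElt B ((k : ℕ) + 1))

/-- A sparse composition of `p` of length `d+1`. -/
def IsSparseComposition (d p : ℕ) (c : Fin (d + 1) → ℕ) : Prop :=
  (∑ i, c i) = p ∧
  ∀ i : Fin (d + 1), 1 ≤ (i : ℕ) →
    c i = 0 ∨ c ⟨(i : ℕ) - 1, lt_of_le_of_lt (Nat.sub_le _ _) i.isLt⟩ = 0

/-- The component `τ_i` of the `+`-component decomposition `Δ(τ)`:
the sign function whose `+`-set is `𝒞^τ_i`. -/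
noncomputable def compFun (n d : ℕ) (τ : Finset ℕ → Bool) (i : ℕ) : Finset ℕ → Bool :=
  ofPlusSet (comp n d τ i)

/-- Keep the `i` smallest elements of `B` and shift the others by `ñ - n`
(this is `g⁻¹_{ñ,d,i} ∘ g_{n,d,i}` on `d`-subsets). -/
def gammaSet (n tn i : ℕ) (B : Finset ℕ) : Finset ℕ :=
  ((B.sort (· ≤ ·)).mapIdx fun k x => if k < i then x else x + tn - n).toFinset

/-- The map `h_{n,ñ,d,p,i}` on sign functions. -/
noncomputable def hFun (n tn i : ℕ) (τ : Finset ℕ → Bool) : Finset ℕ → Bool :=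
  ofPlusSet {A | ∃ B, τ B = true ∧ A = gammaSet n tn i B}

open Classical in
/-- `γ_{τ,ñ}(B)`: replace `b_j` by `b_j + ñ - n` whenever the `(τ,B,j)`-series is
right-aligned. -/
noncomputable def gammaFun (n tn : ℕ) (τ : Finset ℕ → Bool) (B : Finset ℕ) : Finset ℕ :=
  B.image fun x => if RightAligned (series n τ (B.erase x)) then x + tn - n else x

/-- The simple bijection `φ_{n,ñ,d,p}` on sign functions. -/
noncomputable def phiFun (n tn : ℕ) (τ : Finset ℕ → Bool) : Finset ℕ → Bool :=
  ofPlusSet {A | ∃ B, τ B = true ∧ A = gammaFun n tn τ B}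

/-! Call the *type* of a `+`-subset `B` the number of `b ∈ B` whose `(τ, B, ·)`-series starts
with `+`. As a series changes sign at most once, such a series stays `+` up to `b`, while a series
starting with `-` is `+` from `b` on. Since there are only `p ≤ n - d` `+`-subsets, counting these
forced `+`-subsets shows that the elements of the first kind precede the others and that the type
is constant along the edges of `G_{n,d}[τ]`. Moving elements of the first kind down and the others
up one step at a time connects every `+`-subset to the source subset of its type, and
`S_{n,d,i}` has type `i`. So `𝒞^τ_i` consists exactly of the `+`-subsets of type `i`, and these
sizes add up to `p`; and `S_{n,d,i-1}`, `S_{n,d,i}` are adjacent, so they are not both `+`. -/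

open Finset

theorem Finset.insert_inter_insert_of_ne {α : Type*} [DecidableEq α] {a b : α} (s : Finset α)
    (h : a ≠ b) : insert a s ∩ insert b s = s := by
  ext z
  simp only [mem_inter, mem_insert]
  constructor
  · rintro ⟨rfl | hz, rfl | hz'⟩ <;> first | exact absurd rfl h | assumption
  · exact fun hz => ⟨Or.inr hz, Or.inr hz⟩

theorem Finset.sub_card_le_card_Icc_sdiff (n : ℕ) (D : Finset ℕ) : n - #D ≤ #(Icc 1 n \ D) := by
  simpa using le_card_sdiff D (Icc 1 n)

theorem Finset.eq_Icc_one_card {s : Finset ℕ} (hpos : ∀ a ∈ s, 1 ≤ a)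
    (hstep : ∀ a ∈ s, a = 1 ∨ a - 1 ∈ s) : s = Icc 1 #s := by
  have hdown : ∀ a ∈ s, Icc 1 a ⊆ s := by
    intro a
    induction a with
    | zero => intro _; simp
    | succ a ih =>
      intro ha z hz
      rcases (mem_Icc.1 hz).2.eq_or_lt with rfl | hlt
      · exact ha
      rcases hstep _ ha with h | h
      · have := mem_Icc.1 hz; omega
      · exact ih h (mem_Icc.2 ⟨(mem_Icc.1 hz).1, by omega⟩)
  rcases s.eq_empty_or_nonempty with rfl | hne
  · rfl
  have hs : s = Icc 1 (s.max' hne) :=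
    le_antisymm (fun z hz => mem_Icc.2 ⟨hpos z hz, le_max' s z hz⟩) (hdown _ (max'_mem s hne))
  conv_rhs => rw [hs, Nat.card_Icc, Nat.add_sub_cancel]
  exact hs

theorem Finset.eq_Icc_card {s : Finset ℕ} {n : ℕ} (hle : ∀ a ∈ s, a ≤ n)
    (hstep : ∀ a ∈ s, a = n ∨ a + 1 ∈ s) : s = Icc (n + 1 - #s) n := by
  have hup : ∀ k, ∀ a ∈ s, n - a = k → Icc a n ⊆ s := by
    intro k
    induction k with
    | zero => intro a ha hk z hz; have := hle a ha; have := mem_Icc.1 hz; rwa [(by omega : z = a)]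
    | succ k ih =>
      intro a ha hk z hz
      rcases (mem_Icc.1 hz).1.eq_or_lt with rfl | hlt
      · exact ha
      rcases hstep _ ha with h | h
      · omega
      · exact ih _ h (by omega) (mem_Icc.2 ⟨hlt, (mem_Icc.1 hz).2⟩)
  rcases s.eq_empty_or_nonempty with rfl | hne
  · simp
  have hs : s = Icc (s.min' hne) n :=
    le_antisymm (fun z hz => mem_Icc.2 ⟨min'_le s z hz, hle z hz⟩)
      (hup _ _ (min'_mem s hne) rfl)
  have := hle _ (min'_mem s hne)
  conv_rhs => rw [hs, Nat.card_Icc, (by omega : n + 1 - (n + 1 - s.min' hne) = s.min' hne)]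
  exact hs

theorem signChanges_cons_cons (a b : Bool) (l : List Bool) :
    signChanges (a :: b :: l) = (if a = b then 0 else 1) + signChanges (b :: l) := by
  by_cases h : a = b <;> simp [signChanges, h, add_comm]

theorem signChanges_le_cons (a : Bool) (l : List Bool) : signChanges l ≤ signChanges (a :: l) := by
  cases l with
  | nil => simp [signChanges]
  | cons b l => rw [signChanges_cons_cons]; omega

theorem signChanges_cons_le (a b : Bool) (l : List Bool) :
    signChanges (a :: l) ≤ (if a = b then 0 else 1) + signChanges (b :: l) := by
  cases l with
  | nil => simp [signChanges]
  | cons c l =>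
    rw [signChanges_cons_cons, signChanges_cons_cons]
    cases a <;> cases b <;> cases c <;> simp <;> omega

theorem List.Sublist.signChanges_cons_le_cons {l₁ l₂ : List Bool} (h : List.Sublist l₁ l₂)
    (a : Bool) : signChanges (a :: l₁) ≤ signChanges (a :: l₂) := by
  induction h generalizing a with
  | slnil => rfl
  | cons b _ ih =>
    rw [signChanges_cons_cons]
    exact (signChanges_cons_le a b _).trans (Nat.add_le_add_left (ih b) _)
  | cons_cons b _ ih =>
    rw [signChanges_cons_cons, signChanges_cons_cons]
    exact Nat.add_le_add_left (ih b) _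

theorem List.Sublist.signChanges_le {l₁ l₂ : List Bool} (h : List.Sublist l₁ l₂) :
    signChanges l₁ ≤ signChanges l₂ := by
  induction h with
  | slnil => rfl
  | cons b _ ih => exact ih.trans (signChanges_le_cons b _)
  | cons_cons b h _ => exact h.signChanges_cons_le_cons b

theorem List.Sublist.eq_of_signChanges_le_one {x y z : Bool} {l : List Bool}
    (hsub : List.Sublist [x, y, z] l) (hl : signChanges l ≤ 1) (hxz : x = z) : y = x := by
  have := hsub.signChanges_le.trans hl
  rw [signChanges_cons_cons, signChanges_cons_cons] at this
  subst hxz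
  cases x <;> cases y <;> simp_all [signChanges]

theorem series_eq_of_lt_of_lt {n : ℕ} {τ : Finset ℕ → Bool} {C : Finset ℕ}
    (h : signChanges (series n τ C) ≤ 1) {x y z : ℕ} (hx : x ∈ Icc 1 n \ C)
    (hy : y ∈ Icc 1 n \ C) (hz : z ∈ Icc 1 n \ C) (hxy : x < y) (hyz : y < z)
    (hxz : τ (insert x C) = τ (insert z C)) : τ (insert y C) = τ (insert x C) := by
  refine List.Sublist.eq_of_signChanges_le_one (List.Sublist.map (fun w => τ (insert w C)) ?_ :
    List.Sublist ([x, y, z].map _) _) h hxz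
  refine List.sublist_of_subperm_of_pairwise (r := (· ≤ ·)) (List.subperm_of_subset ?_ ?_)
    ?_ (Finset.pairwise_sort _ _)
  · simp [hxy.ne, hyz.ne, (hxy.trans hyz).ne]
  · intro w hw
    simp only [List.mem_cons, List.not_mem_nil, or_false] at hw
    rw [Finset.mem_sort]
    rcases hw with rfl | rfl | rfl <;> assumption
  · simp [hxy.le, hyz.le, (hxy.trans hyz).le]

theorem GAdj.symm {n d : ℕ} {B B' : Finset ℕ} (h : GAdj n d B B') : GAdj n d B' B := by
  obtain ⟨hB, hBc, hB', hB'c, x, hx, y, -, hyB, rfl, hbetw⟩ := h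
  have hyx : y ∉ B.erase x := fun h => hyB (mem_of_mem_erase h)
  refine ⟨hB', hB'c, hB, hBc, y, mem_insert_self y _, x, hB hx, ?_, ?_, ?_⟩
  · simp only [mem_insert, mem_erase, ne_eq, not_true_eq_false, false_and, or_false]
    rintro rfl
    exact hyB hx
  · rw [erase_insert hyx, insert_erase hx]
  · rw [erase_insert hyx]
    intro z hz
    rw [min_comm, max_comm]
    exact hbetw z hz

theorem GAdj.ne {n d : ℕ} {B B' : Finset ℕ} (h : GAdj n d B B') : B ≠ B' := by
  obtain ⟨-, -, -, -, x, -, y, -, hyB, rfl, -⟩ := h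
  exact fun h => hyB (h ▸ mem_insert_self y _)

/-- Holds because no element of `B` lies strictly between the two exchanged elements. -/
theorem GAdj.mem_iff_of_lt_or_mem_iff_of_gt {n d : ℕ} {B B' : Finset ℕ} (h : GAdj n d B B')
    {b : ℕ} (hb : b ∈ B) (hb' : b ∈ B') :
    (∀ z, z < b → (z ∈ B ↔ z ∈ B')) ∨ ∀ z, b < z → (z ∈ B ↔ z ∈ B') := by
  obtain ⟨-, -, -, -, x, -, y, -, hyB, rfl, hbetw⟩ := h
  have hbx : b ∈ B.erase x := (mem_insert.1 hb').resolve_left fun h => hyB (h ▸ hb)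
  have := hbetw b hbx
  have := (mem_erase.1 hbx).1
  have : b ≠ y := fun h => hyB (h ▸ hb)
  by_cases hxb : x < b
  · right
    intro z hz
    simp only [mem_insert, mem_erase]
    grind
  · left
    intro z hz
    simp only [mem_insert, mem_erase]
    grind

theorem mem_sourceSubset {n d i b : ℕ} :
    b ∈ sourceSubset n d i ↔ (1 ≤ b ∧ b ≤ i) ∨ (n - d + i + 1 ≤ b ∧ b ≤ n) := by
  simp [sourceSubset]

theorem card_sourceSubset {n d i : ℕ} (hi : i ≤ d) (hd : d ≤ n) :
    #(sourceSubset n d i) = d := by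
  rw [sourceSubset, card_union_of_disjoint (disjoint_left.2 fun a ha ha' => by
    simp only [mem_Icc] at ha ha'; omega), Nat.card_Icc, Nat.card_Icc]
  omega

theorem gAdj_sourceSubset {n d i : ℕ} (hdn : d < n) (hi : 1 ≤ i) (hid : i ≤ d) :
    GAdj n d (sourceSubset n d (i - 1)) (sourceSubset n d i) := by
  refine ⟨fun b hb => ?_, card_sourceSubset (by omega) hdn.le, fun b hb => ?_,
    card_sourceSubset hid hdn.le, n - d + i, ?_, i, ?_, ?_, ?_, fun z hz => ?_⟩
  · rw [mem_sourceSubset] at hb; rw [mem_Icc]; omega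
  · rw [mem_sourceSubset] at hb; rw [mem_Icc]; omega
  · rw [mem_sourceSubset]; omega
  · rw [mem_Icc]; omega
  · rw [mem_sourceSubset]; omega
  · ext z
    simp only [mem_sourceSubset, mem_insert, mem_erase]
    omega
  · rw [mem_erase, mem_sourceSubset] at hz
    omega

/-- The first entry of `series n τ C` (at the least element of `[n] \ C`) is `+`. -/
def StartsPlus (n : ℕ) (τ : Finset ℕ → Bool) (C : Finset ℕ) : Prop :=
  ∀ x ∈ Icc 1 n \ C, (∀ y ∈ Icc 1 n \ C, x ≤ y) → τ (insert x C) = true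

open Classical in
noncomputable def leftCount (n : ℕ) (τ : Finset ℕ → Bool) (B : Finset ℕ) : ℕ :=
  #(B.filter fun b => StartsPlus n τ (B.erase b))

open Classical in
noncomputable def potential (n : ℕ) (τ : Finset ℕ → Bool) (B : Finset ℕ) : ℕ :=
  ∑ b ∈ B, if StartsPlus n τ (B.erase b) then b else n - b

namespace IsCoSignotope

variable {n d : ℕ} {τ : Finset ℕ → Bool}

theorem mem_Icc_sdiff_erase (hτ : IsCoSignotope n d τ) {B : Finset ℕ} (hB : τ B = true)
    {b : ℕ} (hb : b ∈ B) : b ∈ Icc 1 n \ B.erase b :=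
  mem_sdiff.2 ⟨(hτ.1 B hB).1 hb, notMem_erase b B⟩

theorem plus_of_le_of_startsPlus (hτ : IsCoSignotope n d τ) {B : Finset ℕ} (hB : τ B = true)
    {b : ℕ} (hb : b ∈ B) (hL : StartsPlus n τ (B.erase b)) :
    ∀ x ∈ Icc 1 b \ B.erase b, τ (insert x (B.erase b)) = true := by
  have hser := hτ.2 B (hτ.1 B hB).1 (hτ.1 B hB).2 b hb
  have hbC := hτ.mem_Icc_sdiff_erase hB hb
  have hBb : τ (insert b (B.erase b)) = true := by rwa [insert_erase hb]
  have hbn := mem_Icc.1 (mem_sdiff.1 hbC).1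
  intro x hx
  rw [mem_sdiff, mem_Icc] at hx
  have hxC : x ∈ Icc 1 n \ B.erase b := mem_sdiff.2 ⟨mem_Icc.2 ⟨by omega, by omega⟩, hx.2⟩
  set m := (Icc 1 n \ B.erase b).min' ⟨x, hxC⟩
  have hm : m ∈ Icc 1 n \ B.erase b := min'_mem _ _
  have hmτ : τ (insert m (B.erase b)) = true := hL m hm fun y hy => min'_le _ y hy
  rcases (min'_le _ x hxC : m ≤ x).eq_or_lt with hmx | hmx
  · rwa [← hmx]
  rcases hx.1.2.eq_or_lt with hxb | hxb
  · rwa [hxb]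
  rw [series_eq_of_lt_of_lt hser hm hxC hbC hmx hxb (hmτ.trans hBb.symm), hmτ]

theorem plus_of_ge_of_not_startsPlus (hτ : IsCoSignotope n d τ) {B : Finset ℕ}
    (hB : τ B = true) {b : ℕ} (hb : b ∈ B) (hR : ¬ StartsPlus n τ (B.erase b)) :
    ∀ x ∈ Icc b n \ B.erase b, τ (insert x (B.erase b)) = true := by
  have hser := hτ.2 B (hτ.1 B hB).1 (hτ.1 B hB).2 b hb
  have hbC := hτ.mem_Icc_sdiff_erase hB hb
  have hBb : τ (insert b (B.erase b)) = true := by rwa [insert_erase hb]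
  simp only [StartsPlus, not_forall, Bool.not_eq_true] at hR
  obtain ⟨m, hm, hmin, hmτ⟩ := hR
  have hmb : m < b := (hmin b hbC).lt_of_ne fun h => by rw [h, hBb] at hmτ; cases hmτ
  intro x hx
  by_contra hxτ
  rw [Bool.not_eq_true] at hxτ
  have hbn := mem_Icc.1 (mem_sdiff.1 hbC).1
  rw [mem_sdiff, mem_Icc] at hx
  have hxC : x ∈ Icc 1 n \ B.erase b := mem_sdiff.2 ⟨mem_Icc.2 ⟨by omega, by omega⟩, hx.2⟩
  have hbx : b < x := hx.1.1.lt_of_ne fun h => by rw [← h, hBb] at hxτ; cases hxτ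
  have := series_eq_of_lt_of_lt hser hm hbC hxC hmb hbx (hmτ.trans hxτ.symm)
  rw [hBb, hmτ] at this
  cases this

theorem card_le_plusCount (hτ : IsCoSignotope n d τ) {F : Finset (Finset ℕ)}
    (hF : ∀ A ∈ F, τ A = true) : #F ≤ plusCount τ := by
  rw [plusCount, ← Set.ncard_coe_finset]
  exact Set.ncard_le_ncard (fun A hA => hF A hA)
    ((Icc 1 n).powerset.finite_toSet.subset fun A hA => mem_powerset.2 (hτ.1 A hA).1)

theorem card_le_plusCount_of_forall_insert (hτ : IsCoSignotope n d τ) {C S : Finset ℕ}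
    (hS : Disjoint S C) (hplus : ∀ x ∈ S, τ (insert x C) = true) : #S ≤ plusCount τ := by
  rw [← card_image_of_injOn fun x hx y _ h => (insert_inj (disjoint_left.1 hS hx)).1 h]
  exact hτ.card_le_plusCount fun A hA => by
    obtain ⟨x, hx, rfl⟩ := mem_image.1 hA
    exact hplus x hx

/-- The two families overlap in at most one set, as `insert u C ∩ insert u' C = C` for `u ≠ u'`. -/
theorem card_add_card_le_plusCount_add_one (hτ : IsCoSignotope n d τ)
    {C₁ C₂ S₁ S₂ : Finset ℕ} (hC : C₁ ≠ C₂) (hS₁ : Disjoint S₁ C₁) (hS₂ : Disjoint S₂ C₂)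
    (hplus₁ : ∀ x ∈ S₁, τ (insert x C₁) = true) (hplus₂ : ∀ x ∈ S₂, τ (insert x C₂) = true) :
    #S₁ + #S₂ ≤ plusCount τ + 1 := by
  set F₁ := S₁.image (insert · C₁)
  set F₂ := S₂.image (insert · C₂)
  have hF₁ : #F₁ = #S₁ :=
    card_image_of_injOn fun x hx y _ h => (insert_inj (disjoint_left.1 hS₁ hx)).1 h
  have hF₂ : #F₂ = #S₂ :=
    card_image_of_injOn fun x hx y _ h => (insert_inj (disjoint_left.1 hS₂ hx)).1 h
  have hunion : #(F₁ ∪ F₂) ≤ plusCount τ := hτ.card_le_plusCount fun A hA => by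
    rcases mem_union.1 hA with hA | hA <;> obtain ⟨x, hx, rfl⟩ := mem_image.1 hA
    exacts [hplus₁ x hx, hplus₂ x hx]
  have hinter : #(F₁ ∩ F₂) ≤ 1 := by
    refine card_le_one.2 fun A hA A' hA' => ?_
    by_contra hne
    simp only [F₁, F₂, mem_inter, mem_image] at hA hA'
    obtain ⟨⟨u, -, rfl⟩, ⟨v, -, hv⟩⟩ := hA
    obtain ⟨⟨u', -, rfl⟩, ⟨v', -, hv'⟩⟩ := hA'
    have hu : u ≠ u' := fun h => hne (h ▸ rfl)
    have hvv : v ≠ v' := fun h => hne (by rw [← hv, ← hv', h])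
    apply hC
    rw [← insert_inter_insert_of_ne C₁ hu, ← insert_inter_insert_of_ne C₂ hvv, hv, hv']
  have := card_union_add_card_inter F₁ F₂
  omega

/-- Otherwise the `+`-subsets forced by `b'` (below it) and by `b` (above it) would cover
`[n] \ B` together with `b` and `b'`, more than `plusCount τ + 1` sets. -/
theorem startsPlus_of_lt (hτ : IsCoSignotope n d τ) (hp : plusCount τ + d ≤ n)
    {B : Finset ℕ} (hB : τ B = true) {b b' : ℕ} (hb : b ∈ B) (hb' : b' ∈ B) (hbb' : b < b')
    (hL : StartsPlus n τ (B.erase b')) : StartsPlus n τ (B.erase b) := by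
  by_contra hR
  have hcount := hτ.card_add_card_le_plusCount_add_one
    (C₁ := B.erase b') (C₂ := B.erase b) (S₁ := Icc 1 b' \ B.erase b') (S₂ := Icc b n \ B.erase b)
    (fun h => by simpa [h] using (mem_erase.2 ⟨hbb'.ne, hb⟩ : b ∈ B.erase b'))
    sdiff_disjoint sdiff_disjoint
    (hτ.plus_of_le_of_startsPlus hB hb' hL) (hτ.plus_of_ge_of_not_startsPlus hB hb hR)
  have hcover :
      Icc 1 n \ (B.erase b).erase b' ⊆ (Icc 1 b' \ B.erase b') ∪ (Icc b n \ B.erase b) := by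
    intro z hz
    simp only [mem_sdiff, mem_Icc, mem_erase, mem_union] at hz ⊢
    grind
  have hD : #((B.erase b).erase b') = d - 2 := by
    rw [card_erase_of_mem (mem_erase.2 ⟨hbb'.ne', hb'⟩), card_erase_of_mem hb, (hτ.1 B hB).2]
    rfl
  have hd : 2 ≤ d := by
    rw [← (hτ.1 B hB).2]
    exact one_lt_card.2 ⟨b, hb, b', hb', hbb'.ne⟩
  have := (sub_card_le_card_Icc_sdiff n _).trans ((card_le_card hcover).trans (card_union_le _ _))
  omega

/-- Otherwise `b` would force `+`-subsets below it through `B` and above it through `B'`; as `B`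
and `B'` agree on one side of `b`, these are at least `n - d + 2 > plusCount τ + 1` sets. -/
theorem startsPlus_of_adj (hτ : IsCoSignotope n d τ) (hp : plusCount τ + d ≤ n)
    {B B' : Finset ℕ} (hB : τ B = true) (hB' : τ B' = true) (hadj : GAdj n d B B')
    {b : ℕ} (hb : b ∈ B) (hb' : b ∈ B') (hL : StartsPlus n τ (B.erase b)) :
    StartsPlus n τ (B'.erase b) := by
  by_contra hR
  set S₁ := Icc 1 b \ B.erase b
  set S₂ := Icc b n \ B'.erase b
  have hC : B.erase b ≠ B'.erase b := fun h =>
    hadj.ne (by rw [← insert_erase hb, h, insert_erase hb'])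
  have hcount := hτ.card_add_card_le_plusCount_add_one (S₁ := S₁) (S₂ := S₂) hC
    sdiff_disjoint sdiff_disjoint
    (hτ.plus_of_le_of_startsPlus hB hb hL) (hτ.plus_of_ge_of_not_startsPlus hB' hb' hR)
  have hcover : ∃ D : Finset ℕ, #D = d - 1 ∧ Icc 1 n \ D ⊆ S₁ ∪ S₂ := by
    rcases hadj.mem_iff_of_lt_or_mem_iff_of_gt hb hb' with hlt | hgt
    · refine ⟨B'.erase b, by rw [card_erase_of_mem hb', hadj.2.2.2.1], fun z hz => ?_⟩
      have := hlt z
      simp only [S₁, S₂, mem_sdiff, mem_Icc, mem_erase, mem_union] at hz ⊢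
      grind
    · refine ⟨B.erase b, by rw [card_erase_of_mem hb, hadj.2.1], fun z hz => ?_⟩
      have := hgt z
      simp only [S₁, S₂, mem_sdiff, mem_Icc, mem_erase, mem_union] at hz ⊢
      grind
  obtain ⟨D, hD, hcover⟩ := hcover
  have hbn := mem_Icc.1 ((hτ.1 B hB).1 hb)
  have hbS : b ∈ S₁ ∩ S₂ := by
    simp only [S₁, S₂, mem_inter, mem_sdiff, mem_Icc, notMem_erase, not_false_eq_true, and_true]
    omega
  have hd : 1 ≤ d := hadj.2.1 ▸ card_pos.2 ⟨b, hb⟩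
  have := (sub_card_le_card_Icc_sdiff n _).trans (card_le_card hcover)
  have := card_union_add_card_inter S₁ S₂
  have := card_pos.2 ⟨b, hbS⟩
  omega

theorem startsPlus_iff_of_adj (hτ : IsCoSignotope n d τ) (hp : plusCount τ + d ≤ n)
    {B B' : Finset ℕ} (hB : τ B = true) (hB' : τ B' = true) (hadj : GAdj n d B B')
    {b : ℕ} (hb : b ∈ B) (hb' : b ∈ B') :
    StartsPlus n τ (B.erase b) ↔ StartsPlus n τ (B'.erase b) :=
  ⟨hτ.startsPlus_of_adj hp hB hB' hadj hb hb', hτ.startsPlus_of_adj hp hB' hB hadj.symm hb' hb⟩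

open Classical in
theorem sum_ite_startsPlus_exchange (hτ : IsCoSignotope n d τ) (hp : plusCount τ + d ≤ n)
    {B : Finset ℕ} {x y : ℕ} (hB : τ B = true) (hB' : τ (insert y (B.erase x)) = true)
    (hadj : GAdj n d B (insert y (B.erase x))) (hx : x ∈ B) (hy : y ∉ B) (g h : ℕ → ℕ) :
    (∑ b ∈ insert y (B.erase x),
        if StartsPlus n τ ((insert y (B.erase x)).erase b) then g b else h b) +
      (if StartsPlus n τ (B.erase x) then g x else h x) =
    (∑ b ∈ B, if StartsPlus n τ (B.erase b) then g b else h b) +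
      (if StartsPlus n τ (B.erase x) then g y else h y) := by
  have hyx : y ∉ B.erase x := fun h => hy (mem_of_mem_erase h)
  rw [sum_insert hyx, erase_insert hyx, ← add_sum_erase B _ hx]
  have hrest : ∀ b ∈ B.erase x,
      (if StartsPlus n τ ((insert y (B.erase x)).erase b) then g b else h b) =
        if StartsPlus n τ (B.erase b) then g b else h b := fun b hb =>
    if_congr (hτ.startsPlus_iff_of_adj hp hB hB' hadj (mem_of_mem_erase hb)
      (mem_insert_of_mem hb)).symm rfl rfl
  rw [sum_congr rfl hrest]
  ring

theorem leftCount_eq_of_adj (hτ : IsCoSignotope n d τ) (hp : plusCount τ + d ≤ n)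
    {B B' : Finset ℕ} (hB : τ B = true) (hB' : τ B' = true) (hadj : GAdj n d B B') :
    leftCount n τ B' = leftCount n τ B := by
  classical
  obtain ⟨-, -, -, -, x, hx, y, -, hy, rfl, -⟩ := id hadj
  have := hτ.sum_ite_startsPlus_exchange hp hB hB' hadj hx hy (fun _ => 1) (fun _ => 0)
  simp only [leftCount, card_filter]
  convert Nat.add_right_cancel this using 2

theorem gAdj_of_succ (hτ : IsCoSignotope n d τ) {B : Finset ℕ} (hB : τ B = true) {b y : ℕ}
    (hb : b ∈ B) (hy : y ∈ Icc 1 n) (hyB : y ∉ B) (hby : y + 1 = b ∨ b + 1 = y) :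
    GAdj n d B (insert y (B.erase b)) := by
  obtain ⟨hBI, hBc⟩ := hτ.1 B hB
  refine ⟨hBI, hBc, insert_subset hy ((erase_subset b B).trans hBI), ?_, b, hb, y, hy, hyB, rfl,
    fun z _ => by omega⟩
  rw [card_insert_of_notMem fun h => hyB (mem_of_mem_erase h), card_erase_of_mem hb, hBc]
  have : 0 < d := hBc ▸ card_pos.2 ⟨b, hb⟩
  omega

theorem leftCount_sourceSubset (hτ : IsCoSignotope n d τ) (hp : plusCount τ + d ≤ n) {i : ℕ}
    (hi : i ≤ d) (hS : τ (sourceSubset n d i) = true) : leftCount n τ (sourceSubset n d i) = i := by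
  classical
  set S := sourceSubset n d i
  -- `b` together with the gap `(i, n - d + i]` of `S` gives `n - d + 1 > plusCount τ` subsets.
  have hgap : ∀ b ∈ S, ¬ ∀ x ∈ insert b (Ioc i (n - d + i)), τ (insert x (S.erase b)) = true := by
    intro b hb hplus
    have hbgap : b ∉ Ioc i (n - d + i) := by
      rw [mem_sourceSubset] at hb; rw [mem_Ioc]; omega
    have := hτ.card_le_plusCount_of_forall_insert (disjoint_left.2 fun x hx hxS => ?_) hplus
    · rw [card_insert_of_notMem hbgap, Nat.card_Ioc] at this
      omega
    rw [mem_erase, mem_sourceSubset] at hxS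
    rw [mem_insert, mem_Ioc] at hx
    omega
  have hfilter : S.filter (fun b => StartsPlus n τ (S.erase b)) = Icc 1 i := by
    ext b
    rw [mem_filter, mem_Icc]
    constructor
    · rintro ⟨hb, hL⟩
      by_contra hbi
      refine hgap b hb fun x hx => hτ.plus_of_le_of_startsPlus hS hb hL x ?_
      rw [mem_sourceSubset] at hb
      rw [mem_insert, mem_Ioc] at hx
      rw [mem_sdiff, mem_Icc, mem_erase, mem_sourceSubset]
      omega
    · intro hbi
      have hb : b ∈ S := mem_sourceSubset.2 (Or.inl hbi)
      refine ⟨hb, by_contra fun hR => hgap b hb fun x hx =>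
        hτ.plus_of_ge_of_not_startsPlus hS hb hR x ?_⟩
      rw [mem_insert, mem_Ioc] at hx
      rw [mem_sdiff, mem_Icc, mem_erase, mem_sourceSubset]
      omega
  rw [leftCount, hfilter, Nat.card_Icc, Nat.add_sub_cancel]

theorem eq_sourceSubset_of_forall (hτ : IsCoSignotope n d τ) (hp : plusCount τ + d ≤ n)
    {B : Finset ℕ} (hB : τ B = true)
    (hL : ∀ b ∈ B, StartsPlus n τ (B.erase b) → b = 1 ∨ b - 1 ∈ B)
    (hR : ∀ b ∈ B, ¬ StartsPlus n τ (B.erase b) → b = n ∨ b + 1 ∈ B) :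
    B = sourceSubset n d (leftCount n τ B) := by
  classical
  obtain ⟨hBI, hBc⟩ := hτ.1 B hB
  set L := B.filter fun b => StartsPlus n τ (B.erase b)
  set R := B.filter fun b => ¬ StartsPlus n τ (B.erase b)
  have hL' : L = Icc 1 #L := by
    refine eq_Icc_one_card (fun a ha => (mem_Icc.1 (hBI (mem_filter.1 ha).1)).1) fun a ha => ?_
    obtain ⟨haB, haL⟩ := mem_filter.1 ha
    refine (hL a haB haL).imp_right fun h => mem_filter.2 ⟨h, ?_⟩
    have := (mem_Icc.1 (hBI haB)).1
    exact hτ.startsPlus_of_lt hp hB h haB (by omega) haL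
  have hR' : R = Icc (n + 1 - #R) n := by
    refine eq_Icc_card (fun a ha => (mem_Icc.1 (hBI (mem_filter.1 ha).1)).2) fun a ha => ?_
    obtain ⟨haB, haR⟩ := mem_filter.1 ha
    exact (hR a haB haR).imp_right fun h =>
      mem_filter.2 ⟨h, fun h' => haR (hτ.startsPlus_of_lt hp hB haB h (by omega) h')⟩
  have hcard : #L + #R = d := hBc ▸ card_filter_add_card_filter_not _
  have hd : d ≤ n := hBc ▸ (card_le_card hBI).trans (Nat.card_Icc 1 n).le
  change B = sourceSubset n d #L
  rw [sourceSubset, ← hL', (by omega : n - d + #L + 1 = n + 1 - #R), ← hR',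
    filter_union_filter_not_eq]

/-- Away from the source subsets, some element can be moved by one step towards its end of
`[n]` while staying `+`. -/
theorem exists_adj_potential_lt (hτ : IsCoSignotope n d τ) (hp : plusCount τ + d ≤ n)
    {B : Finset ℕ} (hB : τ B = true) (hne : B ≠ sourceSubset n d (leftCount n τ B)) :
    ∃ B', τ B' = true ∧ GAdj n d B B' ∧ potential n τ B' < potential n τ B := by
  classical
  have hBI := (hτ.1 B hB).1
  by_cases hLmove : ∃ b ∈ B, StartsPlus n τ (B.erase b) ∧ b ≠ 1 ∧ b - 1 ∉ B
  · obtain ⟨b, hb, hL, hb1, hbB⟩ := hLmove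
    have hbI := mem_Icc.1 (hBI hb)
    have hy : b - 1 ∈ Icc 1 n := mem_Icc.2 ⟨by omega, by omega⟩
    have hB' := hτ.plus_of_le_of_startsPlus hB hb hL (b - 1)
      (mem_sdiff.2 ⟨mem_Icc.2 ⟨by omega, by omega⟩, fun h => hbB (mem_of_mem_erase h)⟩)
    have hadj := hτ.gAdj_of_succ hB hb hy hbB (Or.inl (by omega))
    have := hτ.sum_ite_startsPlus_exchange hp hB hB' hadj hb hbB (fun b => b) (n - ·)
    simp only [if_pos hL] at this
    exact ⟨_, hB', hadj, by unfold potential; omega⟩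
  by_cases hRmove : ∃ b ∈ B, ¬ StartsPlus n τ (B.erase b) ∧ b ≠ n ∧ b + 1 ∉ B
  · obtain ⟨b, hb, hR, hbn, hbB⟩ := hRmove
    have hbI := mem_Icc.1 (hBI hb)
    have hy : b + 1 ∈ Icc 1 n := mem_Icc.2 ⟨by omega, by omega⟩
    have hB' := hτ.plus_of_ge_of_not_startsPlus hB hb hR (b + 1)
      (mem_sdiff.2 ⟨mem_Icc.2 ⟨by omega, by omega⟩, fun h => hbB (mem_of_mem_erase h)⟩)
    have hadj := hτ.gAdj_of_succ hB hb hy hbB (Or.inr rfl)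
    have := hτ.sum_ite_startsPlus_exchange hp hB hB' hadj hb hbB (fun b => b) (n - ·)
    simp only [if_neg hR] at this
    exact ⟨_, hB', hadj, by unfold potential; omega⟩
  exact (hne (hτ.eq_sourceSubset_of_forall hp hB
    (fun b hb hL => by_contra fun h => hLmove ⟨b, hb, hL, not_or.1 h⟩)
    (fun b hb hR => by_contra fun h => hRmove ⟨b, hb, hR, not_or.1 h⟩))).elim

theorem mem_comp_leftCount (hτ : IsCoSignotope n d τ) (hp : plusCount τ + d ≤ n)
    {B : Finset ℕ} (hB : τ B = true) : B ∈ comp n d τ (leftCount n τ B) := by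
  induction hN : potential n τ B using Nat.strong_induction_on generalizing B with
  | _ N ih =>
    by_cases hsrc : B = sourceSubset n d (leftCount n τ B)
    · exact ⟨hsrc ▸ hB, hB, hsrc ▸ Relation.ReflTransGen.refl⟩
    obtain ⟨B', hB', hadj, hlt⟩ := hτ.exists_adj_potential_lt hp hB hsrc
    obtain ⟨hS, -, hconn⟩ := ih _ (hN ▸ hlt) hB' rfl
    rw [hτ.leftCount_eq_of_adj hp hB hB' hadj] at hS hconn
    exact ⟨hS, hB, hconn.tail ⟨hB', hB, hadj.symm⟩⟩

theorem leftCount_of_mem_comp (hτ : IsCoSignotope n d τ) (hp : plusCount τ + d ≤ n) {i : ℕ}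
    (hi : i ≤ d) {B : Finset ℕ} (h : B ∈ comp n d τ i) : leftCount n τ B = i := by
  obtain ⟨hS, -, hconn⟩ := h
  induction hconn with
  | refl => exact hτ.leftCount_sourceSubset hp hi hS
  | tail _ hstep ih => rw [hτ.leftCount_eq_of_adj hp hstep.1 hstep.2.1 hstep.2.2, ih]

theorem comp_eq_setOf_leftCount (hτ : IsCoSignotope n d τ) (hp : plusCount τ + d ≤ n) {i : ℕ}
    (hi : i ≤ d) :
    comp n d τ i = {B | τ B = true ∧ leftCount n τ B = i} := by
  ext B
  refine ⟨fun h => ⟨h.2.1, hτ.leftCount_of_mem_comp hp hi h⟩, fun ⟨hB, hBi⟩ => ?_⟩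
  exact hBi ▸ hτ.mem_comp_leftCount hp hB

theorem sum_ncard_comp (hτ : IsCoSignotope n d τ) (hp : plusCount τ + d ≤ n) :
    ∑ i ∈ range (d + 1), (comp n d τ i).ncard = plusCount τ := by
  classical
  set T := (Icc 1 n).powerset.filter fun A => τ A = true
  have hT : ∀ i, {B | τ B = true ∧ leftCount n τ B = i} = ↑(T.filter (leftCount n τ · = i)) := by
    intro i
    ext B
    rw [mem_coe, mem_filter, mem_filter, mem_powerset]
    exact ⟨fun h => ⟨⟨(hτ.1 B h.1).1, h.1⟩, h.2⟩, fun h => ⟨h.1.2, h.2⟩⟩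
  have hplus : plusCount τ = #T := by
    rw [plusCount, ← Set.ncard_coe_finset]
    congr 1
    ext B
    rw [mem_coe, mem_filter, mem_powerset]
    exact ⟨fun h => ⟨(hτ.1 B h).1, h⟩, And.right⟩
  have hmaps : (T : Set (Finset ℕ)).MapsTo (leftCount n τ) (range (d + 1)) := fun B hB => by
    have hB := (hτ.1 B (mem_filter.1 hB).2).2
    exact mem_range.2 (Nat.lt_succ_of_le (hB ▸ card_filter_le _ _))
  rw [hplus, card_eq_sum_card_fiberwise hmaps]
  refine sum_congr rfl fun i hi => ?_
  rw [hτ.comp_eq_setOf_leftCount hp (Nat.lt_succ_iff.1 (mem_range.1 hi)), hT, Set.ncard_coe_finset]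

end IsCoSignotope

/-- **Lemma.** For `p ≤ n - d`, the p-sequence `(|𝒞^τ_0|, …, |𝒞^τ_d|)` of every
`τ ∈ 𝒮̄_p(n,d)` is a sparse composition of `p` of length `d+1`. -/
theorem statement11 (n d p : ℕ) (hdn : d < n) (hp : p + d ≤ n)
    (τ : Finset ℕ → Bool) (hτ : τ ∈ coSigSet n d p) :
    IsSparseComposition d p (fun i : Fin (d + 1) => (comp n d τ (i : ℕ)).ncard) := by
  obtain ⟨hτ, rfl⟩ := hτ
  refine ⟨?_, fun i hi => ?_⟩
  · rw [Fin.sum_univ_eq_sum_range (fun i => (comp n d τ i).ncard)]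
    exact hτ.sum_ncard_comp hp
  by_contra h
  obtain ⟨B, hB⟩ := Set.nonempty_of_ncard_ne_zero (not_or.1 h).1
  obtain ⟨B', hB'⟩ := Set.nonempty_of_ncard_ne_zero (not_or.1 h).2
  have hid : (i : ℕ) ≤ d := Nat.lt_succ_iff.1 i.isLt
  have hS : τ (sourceSubset n d i) = true := hB.1
  have hS' : τ (sourceSubset n d (i - 1)) = true := hB'.1
  -- the adjacent sources `S_{i-1}` and `S_i` would both be `+`, yet have different types
  have := hτ.leftCount_eq_of_adj hp hS' hS (gAdj_sourceSubset hdn hi hid)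
  rw [hτ.leftCount_sourceSubset hp hid hS, hτ.leftCount_sourceSubset hp (by omega) hS'] at this
  omega
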